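/- Let α, β, γ, δ, a be real numbers with sin(α/2) ≠ 0 and sin(β/2) ≠ 0, and suppose sin(α/2)·sin(δ − β/2) = sin(β/2)·sin(γ − α/2), (1 − cos α)·sin δ·cos a = sin α·cos δ + sin γ, and (1 − cos β)·sin γ·cos a = sin β·cos γ + sin δ. Then the (2,2)-entry (middle diagonal entry) of the matrix K = Z(π−δ)·Y(a)·Z(π−α)·Y(a)·Z(π−β)·Y(a)·Z(π−γ) equals 1, and consequently there exists b ∈ ℝ such that Y(a)·Z(π−α)·Y(a)·Z(π−β)·Y(a)·Z(π−γ)·Y(b)·Z(π−δ) equals the 3×3 identity matrix. -/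

import Mathlib

/-! The matrix `K` factors as `A * B` with `A = Z(π-δ) Y(a) Z(π-α) Y(a)` and
`B = Z(π-β) Y(a) Z(π-γ)`. The Coolsaet equalities say that row `1` of `A` equals column `1`
of `B`: the outer coordinates follow from the second and third equalities, the middle one
after multiplying by `sin (α/2) sin (β/2)`, using the half-angle formulas and the first
equality. Since `B` is orthogonal, `K 1 1` is then the squared norm of a column of `B`,
i.e. `1`. A rotation in `SO(3)` with `(1,1)`-entry `1` fixes the `y`-axis, so it is some
`Y(θ)`, and `b = -θ` closes the path. -/

open Real

/-- Rotation about the `y`-axis by angle `t`. -/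
noncomputable def Yrot (t : ℝ) : Matrix (Fin 3) (Fin 3) ℝ :=
  !![Real.cos t, 0, Real.sin t; 0, 1, 0; -Real.sin t, 0, Real.cos t]

/-- Rotation about the `z`-axis by angle `t`. -/
noncomputable def Zrot (t : ℝ) : Matrix (Fin 3) (Fin 3) ℝ :=
  !![Real.cos t, -Real.sin t, 0; Real.sin t, Real.cos t, 0; 0, 0, 1]

open Matrix

lemma Yrot_add (s t : ℝ) : Yrot (s + t) = Yrot s * Yrot t := by
  ext i j
  fin_cases i <;> fin_cases j <;>
    simp [Yrot, mul_apply, Fin.sum_univ_three, cos_add, sin_add] <;> ring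

lemma Zrot_add (s t : ℝ) : Zrot (s + t) = Zrot s * Zrot t := by
  ext i j
  fin_cases i <;> fin_cases j <;>
    simp [Zrot, mul_apply, Fin.sum_univ_three, cos_add, sin_add] <;> ring

lemma Yrot_zero : Yrot 0 = 1 := by
  ext i j; fin_cases i <;> fin_cases j <;> simp [Yrot]

lemma Zrot_zero : Zrot 0 = 1 := by
  ext i j; fin_cases i <;> fin_cases j <;> simp [Zrot]

lemma Yrot_transpose (t : ℝ) : (Yrot t)ᵀ = Yrot (-t) := by
  ext i j; fin_cases i <;> fin_cases j <;> simp [Yrot]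

lemma Zrot_transpose (t : ℝ) : (Zrot t)ᵀ = Zrot (-t) := by
  ext i j; fin_cases i <;> fin_cases j <;> simp [Zrot]

lemma Yrot_mem_specialOrthogonalGroup (t : ℝ) : Yrot t ∈ specialOrthogonalGroup (Fin 3) ℝ := by
  refine mem_specialOrthogonalGroup_iff.2 ⟨(mem_orthogonalGroup_iff _ _).2 ?_, ?_⟩
  · rw [Yrot_transpose, ← Yrot_add, add_neg_cancel, Yrot_zero]
  · simp [Yrot, det_fin_three, ← sq]

lemma Zrot_mem_specialOrthogonalGroup (t : ℝ) : Zrot t ∈ specialOrthogonalGroup (Fin 3) ℝ := by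
  refine mem_specialOrthogonalGroup_iff.2 ⟨(mem_orthogonalGroup_iff _ _).2 ?_, ?_⟩
  · rw [Zrot_transpose, ← Zrot_add, add_neg_cancel, Zrot_zero]
  · simp [Zrot, det_fin_three, ← sq]

lemma exists_cos_sin_eq {c s : ℝ} (h : c ^ 2 + s ^ 2 = 1) : ∃ θ, cos θ = c ∧ sin θ = s := by
  obtain ⟨θ, hθ⟩ := (Complex.norm_eq_one_iff ⟨c, s⟩).1 <| by
    rw [Complex.norm_eq_sqrt_sq_add_sq, h, sqrt_one]
  exact ⟨θ, by simpa using congrArg Complex.re hθ, by simpa using congrArg Complex.im hθ⟩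

lemma mul_apply_eq_one_of_row_eq_col {n : Type*} [Fintype n] [DecidableEq n]
    {A B : Matrix n n ℝ} (hB : B ∈ orthogonalGroup n ℝ) {i j : n} (h : ∀ k, A i k = B k j) :
    (A * B) i j = 1 := by
  have := congrFun (congrFun ((mem_orthogonalGroup_iff' _ _).1 hB) j) j
  simpa [mul_apply, h] using this

lemma exists_eq_Yrot_of_mem_specialOrthogonalGroup {K : Matrix (Fin 3) (Fin 3) ℝ}
    (hK : K ∈ specialOrthogonalGroup (Fin 3) ℝ) (h11 : K 1 1 = 1) : ∃ θ, K = Yrot θ := by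
  obtain ⟨hO, hdet⟩ := mem_specialOrthogonalGroup_iff.1 hK
  have hrow := fun i => congrFun (congrFun ((mem_orthogonalGroup_iff _ _).1 hO) i) i
  have hcol := fun i => congrFun (congrFun ((mem_orthogonalGroup_iff' _ _).1 hO) i) i
  simp only [mul_apply, transpose_apply, Fin.sum_univ_three, one_apply_eq] at hrow hcol
  have h10 : K 1 0 = 0 := by nlinarith [hrow 1]
  have h12 : K 1 2 = 0 := by nlinarith [hrow 1]
  have h01 : K 0 1 = 0 := by nlinarith [hcol 1]
  have h21 : K 2 1 = 0 := by nlinarith [hcol 1]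
  rw [det_fin_three, h10, h12, h01, h21, h11] at hdet
  -- `(K 0 0, K 0 2)` and `(K 2 2, -K 2 0)` are unit vectors whose inner product is `det K = 1`
  have hsq : (K 2 2 - K 0 0) ^ 2 + (K 2 0 + K 0 2) ^ 2 = 0 := by
    linear_combination hrow 0 + hrow 2 - 2 * hdet - K 0 1 * h01 - K 2 1 * h21
  have h22 : K 2 2 = K 0 0 := by nlinarith
  have h20 : K 2 0 = -K 0 2 := by nlinarith
  obtain ⟨θ, hcos, hsin⟩ := exists_cos_sin_eq (c := K 0 0) (s := K 0 2) <| by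
    linear_combination hrow 0 - K 0 1 * h01
  refine ⟨θ, ?_⟩
  ext i j
  fin_cases i <;> fin_cases j <;> simp [Yrot, hcos, hsin, h10, h12, h01, h21, h11, h22, h20]

lemma exists_mul_Yrot_mul_Zrot_eq_one {M : Matrix (Fin 3) (Fin 3) ℝ}
    (hM : M ∈ specialOrthogonalGroup (Fin 3) ℝ) {t : ℝ} (h : (Zrot t * M) 1 1 = 1) :
    ∃ b, M * Yrot b * Zrot t = 1 := by
  obtain ⟨θ, hθ⟩ :=
    exists_eq_Yrot_of_mem_specialOrthogonalGroup (mul_mem (Zrot_mem_specialOrthogonalGroup t) hM) h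
  have hM' : M = Zrot (-t) * Yrot θ := by
    rw [← hθ, ← mul_assoc, ← Zrot_add, neg_add_cancel, Zrot_zero, one_mul]
  refine ⟨-θ, ?_⟩
  rw [hM', mul_assoc (Zrot (-t)), ← Yrot_add, add_neg_cancel, Yrot_zero, mul_one, ← Zrot_add,
    neg_add_cancel, Zrot_zero]

lemma sin_half_mul_cos_mul_cos_sub {α γ δ a : ℝ}
    (h : (1 - cos α) * sin δ * cos a = sin α * cos δ + sin γ) :
    sin (α / 2) * (cos α * cos δ - sin α * sin δ * cos a) =
      -(sin (α / 2) * cos δ + cos (α / 2) * sin γ) := by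
  obtain ⟨θ, rfl⟩ : ∃ θ, α = 2 * θ := ⟨α / 2, by ring⟩
  rw [mul_div_cancel_left₀ θ two_ne_zero, cos_two_mul, sin_two_mul]
  rw [cos_two_mul, sin_two_mul] at h
  linear_combination -cos θ * h - 2 * cos θ * sin δ * cos a * sin_sq_add_cos_sq θ

lemma cos_mul_cos_sub_eq_of_coolsaet {α β γ δ a : ℝ}
    (hα : sin (α / 2) ≠ 0) (hβ : sin (β / 2) ≠ 0)
    (h1 : sin (α / 2) * sin (δ - β / 2) = sin (β / 2) * sin (γ - α / 2))
    (h2 : (1 - cos α) * sin δ * cos a = sin α * cos δ + sin γ)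
    (h3 : (1 - cos β) * sin γ * cos a = sin β * cos γ + sin δ) :
    cos α * cos δ - sin α * sin δ * cos a = cos β * cos γ - sin β * sin γ * cos a := by
  refine mul_left_cancel₀ (mul_ne_zero hα hβ) ?_
  rw [sin_sub, sin_sub] at h1
  linear_combination sin (β / 2) * sin_half_mul_cos_mul_cos_sub h2
    - sin (α / 2) * sin_half_mul_cos_mul_cos_sub h3 + h1

lemma coolsaet_row_eq_col {α β γ δ a : ℝ}
    (hα : sin (α / 2) ≠ 0) (hβ : sin (β / 2) ≠ 0)
    (h1 : sin (α / 2) * sin (δ - β / 2) = sin (β / 2) * sin (γ - α / 2))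
    (h2 : (1 - cos α) * sin δ * cos a = sin α * cos δ + sin γ)
    (h3 : (1 - cos β) * sin γ * cos a = sin β * cos γ + sin δ) (k : Fin 3) :
    (Zrot (π - δ) * Yrot a * Zrot (π - α) * Yrot a) 1 k =
      (Zrot (π - β) * Yrot a * Zrot (π - γ)) k 1 := by
  fin_cases k <;> simp [mul_apply, Fin.sum_univ_three, Yrot, Zrot]
  · linear_combination cos a * h2 + h3 - sin δ * sin_sq_add_cos_sq a
  · linear_combination cos_mul_cos_sub_eq_of_coolsaet hα hβ h1 h2 h3
  · linear_combination sin a * h2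

/-- Converse part of Lemma 3.12: the three Coolsaet equalities imply that the
`(2,2)`-entry of `K = Z(π-δ) Y(a) Z(π-α) Y(a) Z(π-β) Y(a) Z(π-γ)` is `1`, and hence
an almost equilateral quadrilateral with the given data exists, i.e. there is
`b` with `Y(a) Z(π-α) Y(a) Z(π-β) Y(a) Z(π-γ) Y(b) Z(π-δ) = 1`. -/
theorem stmt_8 (α β γ δ a : ℝ)
    (hα : Real.sin (α / 2) ≠ 0) (hβ : Real.sin (β / 2) ≠ 0)
    (h1 : Real.sin (α / 2) * Real.sin (δ - β / 2) =
      Real.sin (β / 2) * Real.sin (γ - α / 2))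
    (h2 : (1 - Real.cos α) * Real.sin δ * Real.cos a = Real.sin α * Real.cos δ + Real.sin γ)
    (h3 : (1 - Real.cos β) * Real.sin γ * Real.cos a = Real.sin β * Real.cos γ + Real.sin δ) :
    (Zrot (π - δ) * Yrot a * Zrot (π - α) * Yrot a * Zrot (π - β) * Yrot a *
      Zrot (π - γ)) 1 1 = 1 ∧
    ∃ b : ℝ, Yrot a * Zrot (π - α) * Yrot a * Zrot (π - β) * Yrot a * Zrot (π - γ) *
      Yrot b * Zrot (π - δ) = 1 := by
  have hY := Yrot_mem_specialOrthogonalGroup a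
  have hZ := Zrot_mem_specialOrthogonalGroup
  have hK : (Zrot (π - δ) * Yrot a * Zrot (π - α) * Yrot a * Zrot (π - β) * Yrot a *
      Zrot (π - γ)) 1 1 = 1 := by
    have hB : Zrot (π - β) * Yrot a * Zrot (π - γ) ∈ orthogonalGroup (Fin 3) ℝ :=
      specialUnitaryGroup_le_unitaryGroup (mul_mem (mul_mem (hZ _) hY) (hZ _))
    simpa only [mul_assoc] using
      mul_apply_eq_one_of_row_eq_col hB (coolsaet_row_eq_col hα hβ h1 h2 h3)
  refine ⟨hK, exists_mul_Yrot_mul_Zrot_eq_one ?_ (by simpa only [mul_assoc] using hK)⟩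
  exact mul_mem (mul_mem (mul_mem (mul_mem (mul_mem hY (hZ _)) hY) (hZ _)) hY) (hZ _)
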